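/- Let x > 0 and a > 0 be real numbers. Then the limit as n → ∞ of (1/(2n)) · log( a^{2n} · L_{2n}(x/a) ) exists and equals log( (x + √(x² + 4a²)) / 2 ). -/

import Mathlib

open Filter Real

/-- The Lucas polynomials. -/
def lucas : ℕ → ℝ → ℝ
  | 0, _ => 2
  | 1, x => x
  | (m + 2), x => x * lucas (m + 1) x + lucas m x

open Topology

/-!
With `α, β = (x ± √(x² + 4a²)) / 2` the roots of `t² - x t - a²`, the Binet formula gives
`a^{2n} L_{2n}(x/a) = α^{2n} + β^{2n}`. Since `|β| ≤ α`, this lies between `α^{2n}` and `2 α^{2n}`,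
so its `2n`-th root tends to `α`.
-/

theorem lucas_eq_pow_add_pow {y p q : ℝ} (hsum : p + q = y) (hprod : p * q = -1) (m : ℕ) :
    lucas m y = p ^ m + q ^ m := by
  induction m using Nat.twoStepInduction with
  | zero => norm_num [lucas]
  | one => simp [lucas, hsum]
  | more m ih₁ ih₂ =>
    rw [lucas, ih₁, ih₂, ← hsum]
    linear_combination (p ^ m + q ^ m) * hprod

theorem pow_mul_lucas_div_eq {x a α β : ℝ} (ha : a ≠ 0) (hsum : α + β = x)
    (hprod : α * β = -a ^ 2) (m : ℕ) :
    a ^ m * lucas m (x / a) = α ^ m + β ^ m := by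
  have hsum' : α / a + β / a = x / a := by rw [← add_div, hsum]
  have hprod' : α / a * (β / a) = -1 := by field_simp; linear_combination hprod
  rw [lucas_eq_pow_add_pow hsum' hprod', div_pow, div_pow]
  field_simp

theorem tendsto_log_pow_add_pow {α β : ℝ} (hα : 0 < α) (hβ : |β| ≤ α) :
    Tendsto (fun n : ℕ => 1 / (2 * (n : ℝ)) * log (α ^ (2 * n) + β ^ (2 * n))) atTop
      (𝓝 (log α)) := by
  have hlower (n : ℕ) : α ^ (2 * n) ≤ α ^ (2 * n) + β ^ (2 * n) :=
    le_add_of_nonneg_right ((even_two_mul n).pow_nonneg β)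
  have hupper (n : ℕ) : α ^ (2 * n) + β ^ (2 * n) ≤ 2 * α ^ (2 * n) := by
    have : β ^ (2 * n) ≤ α ^ (2 * n) := by
      rw [← (even_two_mul n).pow_abs]
      exact pow_le_pow_left₀ (abs_nonneg β) hβ _
    linarith
  have hlog_pow (n : ℕ) : log (α ^ (2 * n)) = 2 * n * log α := by
    rw [log_pow]; push_cast; ring
  have hinv : Tendsto (fun n : ℕ => 1 / (2 * (n : ℝ))) atTop (𝓝 0) := by
    simp_rw [one_div]
    exact tendsto_inv_atTop_zero.comp
      ((tendsto_natCast_atTop_atTop (R := ℝ)).const_mul_atTop two_pos)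
  have hbound : Tendsto (fun n : ℕ => log α + 1 / (2 * (n : ℝ)) * log 2) atTop (𝓝 (log α)) := by
    simpa using (hinv.mul_const (log 2)).const_add (log α)
  refine tendsto_of_tendsto_of_tendsto_of_le_of_le' tendsto_const_nhds hbound ?_ ?_
  all_goals
    filter_upwards [eventually_ge_atTop 1] with n hn
    have hn' : (0 : ℝ) < 2 * n := by positivity
    have hpos : 0 < α ^ (2 * n) := by positivity
  · rw [one_div_mul_eq_div, le_div_iff₀' hn', ← hlog_pow]
    exact log_le_log hpos (hlower n)
  · calc 1 / (2 * (n : ℝ)) * log (α ^ (2 * n) + β ^ (2 * n))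
        ≤ 1 / (2 * (n : ℝ)) * log (2 * α ^ (2 * n)) :=
          mul_le_mul_of_nonneg_left (log_le_log (hpos.trans_le (hlower n)) (hupper n))
            (by positivity)
      _ = log α + 1 / (2 * (n : ℝ)) * log 2 := by
          rw [log_mul two_ne_zero hpos.ne', hlog_pow]; field_simp; ring

theorem cycleDicot_free_energy (x a : ℝ) (hx : 0 < x) (ha : 0 < a) :
    Filter.Tendsto
      (fun n : ℕ => (1 / (2 * (n : ℝ))) * Real.log (a ^ (2 * n) * lucas (2 * n) (x / a)))
      Filter.atTop
      (nhds (Real.log ((x + Real.sqrt (x ^ 2 + 4 * a ^ 2)) / 2))) := by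
  set s := √(x ^ 2 + 4 * a ^ 2)
  have hs_sq : s ^ 2 = x ^ 2 + 4 * a ^ 2 := sq_sqrt (by positivity)
  have hs_pos : 0 < s := sqrt_pos.mpr (by positivity)
  clear_value s
  have hroots (n : ℕ) : a ^ (2 * n) * lucas (2 * n) (x / a) =
      ((x + s) / 2) ^ (2 * n) + ((x - s) / 2) ^ (2 * n) :=
    pow_mul_lucas_div_eq ha.ne' (by ring) (by linear_combination -hs_sq / 4) _
  simp_rw [hroots]
  exact tendsto_log_pow_add_pow (by positivity) (abs_le.mpr ⟨by linarith, by linarith⟩)
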